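/- For every positive integer e, the entries a_{i,j}^{(e)} of R_n^e satisfy the relation F_{e-1} a_{i,j}^{(e)} = F_e a_{i-1,j}^{(e)} + F_{e+1} a_{i-1,j-1}^{(e)} - F_e a_{i,j-1}^{(e)} for all 2 ≤ i ≤ n and 2 ≤ j ≤ n, where F is the Fibonacci sequence with F_0 = 0, F_1 = 1. -/
import Mathlib

open Polynomial

/-- `R n` is the `n × n` integer matrix whose 1-based `(i,j)` entry is `C(i-1, n-j)`. -/
def Rmat (n : ℕ) : Matrix (Fin n) (Fin n) ℤ :=
  Matrix.of fun i j => (Nat.choose i.1 (n - 1 - j.1) : ℤ)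

private lemma deg_lin_pow (a b : ℤ) (i : ℕ) : ((C a * X + C b) ^ i).natDegree ≤ i :=
  natDegree_pow_le.trans (by
    calc i * (C a * X + C b).natDegree ≤ i * 1 := Nat.mul_le_mul_left i natDegree_linear_le
    _ = i := mul_one i)

private lemma reflect_lin (a b : ℤ) : reflect 1 (C a * X + C b) = C b * X + C a := by
  have h : (C a * X + C b : ℤ[X]) = C a * X ^ 1 + C b := by ring
  rw [h, reflect_add, reflect_C_mul_X_pow, reflect_C]
  have : revAt 1 1 = 0 := revAt_le (le_refl 1)
  rw [this, pow_zero, pow_one, mul_one]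
  ring

private lemma reflect_lin_pow (a b : ℤ) (i : ℕ) :
    reflect i ((C a * X + C b) ^ i) = (C b * X + C a) ^ i := by
  induction i with
  | zero => simp
  | succ k ih =>
    rw [pow_succ, reflect_mul _ _ (deg_lin_pow a b k) natDegree_linear_le, ih, reflect_lin,
      pow_succ]

private lemma comp_coeff (p : ℤ[X]) (n m : ℕ) (hd : p.natDegree < n) :
    (p.comp (X + 1)).coeff m = ∑ k ∈ Finset.range n, p.coeff k * (Nat.choose k m : ℤ) := by
  rw [comp_eq_sum_left, sum_over_range' p (by simp) n hd, finset_sum_coeff]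
  refine Finset.sum_congr rfl fun k _ => ?_
  rw [coeff_C_mul, coeff_X_add_one_pow]

/-- Entries of `Rmat n ^ e` are coefficients of `(F_{e+1} X + F_e)^i (F_e X + F_{e-1})^{n-1-i}`. -/
private lemma pow_entry (n : ℕ) (e : ℕ) (he : 1 ≤ e) : ∀ (i j : Fin n),
    (Rmat n ^ e) i j =
      ((C (Nat.fib (e + 1) : ℤ) * X + C (Nat.fib e : ℤ)) ^ i.1 *
        (C (Nat.fib e : ℤ) * X + C (Nat.fib (e - 1) : ℤ)) ^ (n - 1 - i.1)).coeff j.1 := by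
  induction e, he using Nat.le_induction with
  | base =>
    intro i j
    have h2 : (Nat.fib 2 : ℤ) = 1 := by norm_num [Nat.fib_two]
    have h1 : (Nat.fib 1 : ℤ) = 1 := by norm_num
    have h0 : (Nat.fib 0 : ℤ) = 0 := by norm_num
    rw [pow_one, h2, h1, h0, C_1, C_0]
    simp only [one_mul, add_zero]
    simp only [Rmat, Matrix.of_apply]
    rw [coeff_mul_X_pow']
    have hi : i.1 ≤ n - 1 := by omega
    have hj : j.1 ≤ n - 1 := by omega
    split_ifs with h
    · rw [coeff_X_add_one_pow]
      congr 1
      have h1 : j.1 - (n - 1 - i.1) = i.1 - (n - 1 - j.1) := by omega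
      have h2 : n - 1 - j.1 ≤ i.1 := by omega
      rw [h1, Nat.choose_symm h2]
    · have : i.1 < n - 1 - j.1 := by omega
      rw [Nat.choose_eq_zero_of_lt this, Nat.cast_zero]
  | succ e he ih =>
    intro i j
    have hi : i.1 ≤ n - 1 := by omega
    have hj : j.1 ≤ n - 1 := by omega
    set a : ℤ := (Nat.fib (e + 1) : ℤ) with ha
    set b : ℤ := (Nat.fib e : ℤ) with hb
    set d : ℤ := (Nat.fib (e - 1) : ℤ) with hd
    set m : ℕ := n - 1 - i.1 with hm
    have hsum : i.1 + m = n - 1 := by omega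
    set p : ℤ[X] := (C a * X + C b) ^ i.1 * (C b * X + C d) ^ m with hp
    have hdeg : p.natDegree < n := by
      have h3 : p.natDegree ≤ i.1 + m :=
        natDegree_mul_le.trans (add_le_add (deg_lin_pow a b i.1) (deg_lin_pow b d m))
      omega
    have step1 : (Rmat n ^ (e + 1)) i j
        = ∑ k ∈ Finset.range n, p.coeff k * (Nat.choose k (n - 1 - j.1) : ℤ) := by
      rw [pow_succ, Matrix.mul_apply, ← Fin.sum_univ_eq_sum_range
        (fun k => p.coeff k * (Nat.choose k (n - 1 - j.1) : ℤ)) n]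
      exact Finset.sum_congr rfl fun k _ => by rw [ih i k]; rfl
    have hbd : b + d = a := by
      rw [ha, hb, hd, ← Nat.cast_add]
      congr 1
      have h3 := Nat.fib_add_two (n := e - 1)
      have h1 : e - 1 + 1 = e := by omega
      have h2 : e - 1 + 2 = e + 1 := by omega
      rw [h1, h2] at h3
      omega
    have hab : a + b = (Nat.fib (e + 2) : ℤ) := by
      rw [ha, hb, ← Nat.cast_add]
      congr 1
      have h3 := Nat.fib_add_two (n := e)
      omega
    have e1 : C a * (X + 1) + C b = C a * X + C (a + b) := by rw [C_add]; ring
    have e2 : C b * (X + 1) + C d = C b * X + C (b + d) := by rw [C_add]; ring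
    have step2 : p.comp (X + 1)
        = (C a * X + C (Nat.fib (e + 2) : ℤ)) ^ i.1 * (C b * X + C a) ^ m := by
      rw [hp]
      simp only [mul_comp, pow_comp, add_comp, C_comp, X_comp]
      rw [e1, e2, hab, hbd]
    have step3' : reflect (n - 1) ((C a * X + C (Nat.fib (e + 2) : ℤ)) ^ i.1
          * (C b * X + C a) ^ m)
        = (C (Nat.fib (e + 2) : ℤ) * X + C a) ^ i.1 * (C a * X + C b) ^ m := by
      rw [← hsum, reflect_mul _ _ (deg_lin_pow a _ i.1) (deg_lin_pow b a m),
        reflect_lin_pow, reflect_lin_pow]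
    have hrev : revAt (n - 1) j.1 = n - 1 - j.1 := revAt_le hj
    rw [step1, ← comp_coeff p n _ hdeg, step2, ← hrev, ← coeff_reflect, step3']
    have h1 : e + 1 + 1 = e + 2 := by omega
    have h2 : e + 1 - 1 = e := by omega
    rw [h1, h2, hb]

private lemma coeff_lin_mul (u v : ℤ) (p : ℤ[X]) (k : ℕ) :
    ((C u * X + C v) * p).coeff (k + 1) = u * p.coeff k + v * p.coeff (k + 1) := by
  rw [add_mul, coeff_add, mul_assoc, coeff_C_mul, coeff_X_mul, coeff_C_mul]

/-- For every positive integer `e`, the entries `a_{i,j}` of `R_n ^ e` satisfy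
`F_{e-1} a_{i,j} = F_e a_{i-1,j} + F_{e+1} a_{i-1,j-1} - F_e a_{i,j-1}`
for all `2 ≤ i, j ≤ n` (1-based indexing). -/
theorem Rmat_pow_recurrence (n : ℕ) (hn : 2 ≤ n) (e : ℕ) (he : 0 < e) (i j : ℕ)
    (hi2 : 2 ≤ i) (hin : i ≤ n) (hj2 : 2 ≤ j) (hjn : j ≤ n) :
    (Nat.fib (e - 1) : ℤ) * (Rmat n ^ e) ⟨i - 1, by omega⟩ ⟨j - 1, by omega⟩ =
      (Nat.fib e : ℤ) * (Rmat n ^ e) ⟨i - 2, by omega⟩ ⟨j - 1, by omega⟩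
        + (Nat.fib (e + 1) : ℤ) * (Rmat n ^ e) ⟨i - 2, by omega⟩ ⟨j - 2, by omega⟩
        - (Nat.fib e : ℤ) * (Rmat n ^ e) ⟨i - 1, by omega⟩ ⟨j - 2, by omega⟩ := by
  have he1 : 1 ≤ e := he
  rw [pow_entry n e he1, pow_entry n e he1, pow_entry n e he1, pow_entry n e he1]
  simp only [Fin.val_mk]
  set a : ℤ := (Nat.fib (e + 1) : ℤ) with ha
  set b : ℤ := (Nat.fib e : ℤ) with hb
  set d : ℤ := (Nat.fib (e - 1) : ℤ) with hd
  have g1 : n - 1 - (i - 1) = n - i := by omega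
  have g2 : n - 1 - (i - 2) = (n - i) + 1 := by omega
  have g3 : i - 1 = (i - 2) + 1 := by omega
  have g4 : j - 1 = (j - 2) + 1 := by omega
  rw [g1, g2, g3, g4]
  set A : ℤ[X] := C a * X + C b with hA
  set B : ℤ[X] := C b * X + C d with hB
  set Q : ℤ[X] := A ^ (i - 2) * B ^ (n - i) with hQ
  have hP1 : A ^ ((i - 2) + 1) * B ^ (n - i) = A * Q := by rw [hQ]; ring
  have hP2 : A ^ (i - 2) * B ^ ((n - i) + 1) = B * Q := by rw [hQ]; ring
  rw [hP1, hP2]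
  have e1 := coeff_lin_mul b d (A * Q) (j - 2)
  have e2 := coeff_lin_mul a b (B * Q) (j - 2)
  have h3 : (C b * X + C d) * (A * Q) = (C a * X + C b) * (B * Q) := by
    rw [hA, hB]; ring
  rw [h3] at e1
  linear_combination e2 - e1
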